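/- (Law-of-large-numbers step in the proof of the consistency theorem.) Let (Z_1, X_1), (Z_2, X_2), … be i.i.d. pairs where Z_n ∈ {1, 2} with P(Z_n = i) = α_i* (α₁*, α₂* > 0, α₁* + α₂* = 1), and conditionally on Z_n = i, X_n is Gaussian with mean μ_i* and variance (σ_i*)² > 0. For each N, let V_N be the infimum, over all soft membership assignments m for the data (X_1, …, X_N) whose induced parameters satisfy α_i(m) > 0 and σ_i²(m) > 0 for i = 1,2, of the quantity (α₁/2) ln(σ₁²) + (α₂/2) ln(σ₂²) + H(α₁, α₂) (parameters induced by m), which equals (1/2) ln G(m). Then for every ε > 0, lim_{N→∞} P( V_N ≤ (α₁*/2) ln((σ₁*)²) + (α₂*/2) ln((σ₂*)²) + H(α₁*, α₂*) + ε ) = 1. -/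

import Mathlib

open Real Finset MeasureTheory ProbabilityTheory Filter
open scoped NNReal

noncomputable section

/-- Binary entropy-type function `H(a, b) = -a ln a - b ln b` (nats). -/
def H2 (a b : ℝ) : ℝ := -a * Real.log a - b * Real.log b

/-- A soft membership assignment: each `m n ∈ [0,1]`. -/
def isMemb {N : ℕ} (m : Fin N → ℝ) : Prop := ∀ n, 0 ≤ m n ∧ m n ≤ 1

/-- Induced mixing weight `α` for the class with weights `w`. -/
def alph {N : ℕ} (w : Fin N → ℝ) : ℝ := (∑ n, w n) / N

/-- Induced mean `μ` for the class with weights `w`. -/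
def muI {N : ℕ} (x w : Fin N → ℝ) : ℝ := (∑ n, w n * x n) / (alph w * N)

/-- Induced variance `σ²` for the class with weights `w`. -/
def sig2 {N : ℕ} (x w : Fin N → ℝ) : ℝ :=
  (∑ n, w n * (x n - muI x w) ^ 2) / (alph w * N)

/-- The quantity `(α₁/2) ln σ₁² + (α₂/2) ln σ₂² + H(α₁, α₂)`, i.e. `(1/2) ln G(m)`,
for the parameters induced by the assignment `m` on data `x`. -/
def halfLogG {N : ℕ} (x m : Fin N → ℝ) : ℝ :=
  alph m / 2 * Real.log (sig2 x m)
    + (alph fun n => 1 - m n) / 2 * Real.log (sig2 x fun n => 1 - m n)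
    + H2 (alph m) (alph fun n => 1 - m n)

/-- The infimum `V_N` of `(1/2) ln G(m)` over all soft assignments `m` for the data `x`
whose induced parameters satisfy `αᵢ > 0` and `σᵢ² > 0`, computed in `EReal`. -/
def Vinf {N : ℕ} (x : Fin N → ℝ) : EReal :=
  sInf {v : EReal | ∃ m : Fin N → ℝ, isMemb m ∧
    0 < alph m ∧ (0 < alph fun n => 1 - m n) ∧
    0 < sig2 x m ∧ (0 < sig2 x fun n => 1 - m n) ∧
    v = ((halfLogG x m : ℝ) : EReal)}

/-- The joint law of a labelled sample `(Z, X)`: `Z = i` with probability `αᵢ` and,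
conditionally on `Z = i`, `X` is Gaussian with mean `μᵢ` and variance `vᵢ`. -/
def pairLaw (a₁ a₂ μ₁ μ₂ : ℝ) (v₁ v₂ : ℝ≥0) : Measure (Fin 2 × ℝ) :=
  ENNReal.ofReal a₁ • (Measure.dirac (0 : Fin 2)).prod (gaussianReal μ₁ v₁)
    + ENNReal.ofReal a₂ • (Measure.dirac (1 : Fin 2)).prod (gaussianReal μ₂ v₂)

open scoped Topology

/-! Label each observation by its true component: the hard assignment `m_n = 1{Z_n = 0}`.
Its induced parameters are ratios of the weighted empirical moments `(1/N) ∑ 1{Z_n = i} X_n ^ k`,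
`k = 0, 1, 2`, which by the strong law of large numbers converge almost surely to
`αᵢ*`, `αᵢ* μᵢ*` and `αᵢ* ((σᵢ*)² + (μᵢ*)²)`. Hence almost surely this assignment is eventually
admissible and its `(1/2) ln G` converges to the target value, so `V_N` is eventually below the
target plus `ε`; almost sure eventual membership forces the probabilities to tend to one. -/

def empiricalMean (f : ℕ → ℝ) (N : ℕ) : ℝ := (∑ n ∈ range N, f n) / N

lemma alph_eq_empiricalMean (w : ℕ → ℝ) (N : ℕ) :
    alph (fun i : Fin N => w i) = empiricalMean w N := by
  rw [alph, empiricalMean, Fin.sum_univ_eq_sum_range w]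

lemma sig2_eq_sub_sq {N : ℕ} (x w : Fin N → ℝ) :
    sig2 x w = (∑ n, w n * x n ^ 2) / (∑ n, w n) - ((∑ n, w n * x n) / (∑ n, w n)) ^ 2 := by
  have hmass : alph w * N = ∑ n, w n := by
    rcases eq_or_ne N 0 with rfl | hN
    · simp
    · rw [alph, div_mul_cancel₀ _ (Nat.cast_ne_zero.2 hN)]
  rw [sig2, muI, hmass]
  set s := ∑ n, w n
  set μ := (∑ n, w n * x n) / s
  have hexpand : ∑ n, w n * (x n - μ) ^ 2 =
      ∑ n, w n * x n ^ 2 - 2 * μ * ∑ n, w n * x n + μ ^ 2 * s := by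
    simp only [s, Finset.mul_sum, ← Finset.sum_sub_distrib, ← Finset.sum_add_distrib]
    exact Finset.sum_congr rfl fun n _ => by ring
  rcases eq_or_ne s 0 with hs | hs
  · simp [μ, hs]
  · rw [hexpand]
    simp only [μ]
    field_simp
    ring

lemma sig2_eq_empiricalMean (x w : ℕ → ℝ) (N : ℕ) :
    sig2 (fun i : Fin N => x i) (fun i => w i) =
      empiricalMean (fun n => w n * x n ^ 2) N / empiricalMean w N
        - (empiricalMean (fun n => w n * x n) N / empiricalMean w N) ^ 2 := by
  rw [sig2_eq_sub_sq, Fin.sum_univ_eq_sum_range (fun n => w n * x n ^ 2),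
    Fin.sum_univ_eq_sum_range w, Fin.sum_univ_eq_sum_range (fun n => w n * x n)]
  rcases eq_or_ne N 0 with rfl | hN
  · simp [empiricalMean]
  · simp only [empiricalMean, div_div_div_cancel_right₀ (Nat.cast_ne_zero.2 hN : (N : ℝ) ≠ 0)]

structure TendstoWeightedMoments (w x : ℕ → ℝ) (a μ v : ℝ) : Prop where
  mass : Tendsto (empiricalMean w) atTop (𝓝 a)
  first : Tendsto (empiricalMean fun n => w n * x n) atTop (𝓝 (a * μ))
  second : Tendsto (empiricalMean fun n => w n * x n ^ 2) atTop (𝓝 (a * (v + μ ^ 2)))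

namespace TendstoWeightedMoments

variable {w x : ℕ → ℝ} {a μ v : ℝ}

lemma tendsto_alph (h : TendstoWeightedMoments w x a μ v) :
    Tendsto (fun N => alph (fun i : Fin N => w i)) atTop (𝓝 a) := by
  simpa only [alph_eq_empiricalMean] using h.mass

lemma tendsto_sig2 (h : TendstoWeightedMoments w x a μ v) (ha : a ≠ 0) :
    Tendsto (fun N => sig2 (fun i : Fin N => x i) (fun i => w i)) atTop (𝓝 v) := by
  simp only [sig2_eq_empiricalMean]
  have hv : v = a * (v + μ ^ 2) / a - (a * μ / a) ^ 2 := by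
    field_simp
    ring
  rw [hv]
  exact (h.second.div h.mass ha).sub ((h.first.div h.mass ha).pow 2)

end TendstoWeightedMoments

lemma H2_eq_negMulLog_add (a b : ℝ) : H2 a b = negMulLog a + negMulLog b := by
  simp only [H2, negMulLog]
  ring

lemma tendsto_halfLogG {w x : ℕ → ℝ} {a₁ a₂ μ₁ μ₂ v₁ v₂ : ℝ}
    (h₁ : TendstoWeightedMoments w x a₁ μ₁ v₁)
    (h₂ : TendstoWeightedMoments (fun n => 1 - w n) x a₂ μ₂ v₂)
    (ha₁ : a₁ ≠ 0) (ha₂ : a₂ ≠ 0) (hv₁ : v₁ ≠ 0) (hv₂ : v₂ ≠ 0) :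
    Tendsto (fun N => halfLogG (fun i : Fin N => x i) (fun i => w i)) atTop
      (𝓝 (a₁ / 2 * log v₁ + a₂ / 2 * log v₂ + H2 a₁ a₂)) := by
  simp only [halfLogG, H2_eq_negMulLog_add]
  have hH := (continuous_negMulLog.tendsto a₁).comp h₁.tendsto_alph |>.add
    ((continuous_negMulLog.tendsto a₂).comp h₂.tendsto_alph)
  exact (((h₁.tendsto_alph.div_const 2).mul ((h₁.tendsto_sig2 ha₁).log hv₁)).add
    ((h₂.tendsto_alph.div_const 2).mul ((h₂.tendsto_sig2 ha₂).log hv₂))).add hH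

lemma Vinf_le_halfLogG {N : ℕ} {x m : Fin N → ℝ} (hm : isMemb m)
    (hα₁ : 0 < alph m) (hα₂ : 0 < alph fun n => 1 - m n)
    (hσ₁ : 0 < sig2 x m) (hσ₂ : 0 < sig2 x fun n => 1 - m n) :
    Vinf x ≤ halfLogG x m :=
  sInf_le ⟨m, hm, hα₁, hα₂, hσ₁, hσ₂, rfl⟩

lemma eventually_Vinf_lt {w x : ℕ → ℝ} {a₁ a₂ μ₁ μ₂ v₁ v₂ c : ℝ}
    (hw : ∀ n, 0 ≤ w n ∧ w n ≤ 1)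
    (h₁ : TendstoWeightedMoments w x a₁ μ₁ v₁)
    (h₂ : TendstoWeightedMoments (fun n => 1 - w n) x a₂ μ₂ v₂)
    (ha₁ : 0 < a₁) (ha₂ : 0 < a₂) (hv₁ : 0 < v₁) (hv₂ : 0 < v₂)
    (hc : a₁ / 2 * log v₁ + a₂ / 2 * log v₂ + H2 a₁ a₂ < c) :
    ∀ᶠ N in atTop, Vinf (fun i : Fin N => x i) < c := by
  filter_upwards [h₁.tendsto_alph.eventually_const_lt ha₁,
    h₂.tendsto_alph.eventually_const_lt ha₂,
    (h₁.tendsto_sig2 ha₁.ne').eventually_const_lt hv₁,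
    (h₂.tendsto_sig2 ha₂.ne').eventually_const_lt hv₂,
    (tendsto_halfLogG h₁ h₂ ha₁.ne' ha₂.ne' hv₁.ne' hv₂.ne').eventually_lt_const hc]
    with N hα₁ hα₂ hσ₁ hσ₂ hlt
  exact (Vinf_le_halfLogG (fun i => hw i) hα₁ hα₂ hσ₁ hσ₂).trans_lt (EReal.coe_lt_coe_iff.2 hlt)

lemma ae_tendsto_empiricalMean_of_identDistrib {Ω α : Type*} [MeasurableSpace Ω]
    [MeasurableSpace α] {P : Measure Ω} {Y : ℕ → Ω → α} (hY : ∀ n, Measurable (Y n))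
    (hindep : Pairwise fun i j => IndepFun (Y i) (Y j) P) {ν : Measure α}
    (hlaw : ∀ n, P.map (Y n) = ν)
    {f : α → ℝ} (hf : Measurable f) (hfi : Integrable f ν) :
    ∀ᵐ ω ∂P, Tendsto (empiricalMean fun n => f (Y n ω)) atTop (𝓝 (∫ y, f y ∂ν)) := by
  have hident (n : ℕ) : IdentDistrib (fun ω => f (Y n ω)) (fun ω => f (Y 0 ω)) P P :=
    (IdentDistrib.mk (hY n).aemeasurable (hY 0).aemeasurable (by rw [hlaw, hlaw])).comp hf
  have hint : Integrable (fun ω => f (Y 0 ω)) P := by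
    rw [← hlaw 0] at hfi
    exact hfi.comp_measurable (hY 0)
  have hmean : ∫ ω, f (Y 0 ω) ∂P = ∫ y, f y ∂ν := by
    rw [← hlaw 0, integral_map (hY 0).aemeasurable hf.aestronglyMeasurable]
  rw [← hmean]
  exact strong_law_ae_real (fun n ω => f (Y n ω)) hint
    (fun i j hij => (hindep hij).comp hf hf) hident

lemma integral_sq_gaussianReal (μ : ℝ) (v : ℝ≥0) :
    ∫ x, x ^ 2 ∂gaussianReal μ v = v + μ ^ 2 := by
  have h := variance_eq_sub (memLp_id_gaussianReal (μ := μ) (v := v) 2)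
  simp only [variance_id_gaussianReal, integral_id_gaussianReal, Pi.pow_apply, id] at h
  linarith

section pairLaw

variable {a₁ a₂ μ₁ μ₂ : ℝ} {v₁ v₂ : ℝ≥0}

lemma pairLaw_eq_map : pairLaw a₁ a₂ μ₁ μ₂ v₁ v₂ =
    ENNReal.ofReal a₁ • (gaussianReal μ₁ v₁).map (Prod.mk 0)
      + ENNReal.ofReal a₂ • (gaussianReal μ₂ v₂).map (Prod.mk 1) := by
  rw [pairLaw, Measure.dirac_prod, Measure.dirac_prod]

lemma integrable_map_prodMk_iff {β : Type*} [MeasurableSpace β] {μ : Measure ℝ} (b : β)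
    {f : β × ℝ → ℝ} (hf : Measurable f) :
    Integrable f (μ.map (Prod.mk b)) ↔ Integrable (fun x => f (b, x)) μ :=
  integrable_map_measure hf.aestronglyMeasurable measurable_prodMk_left.aemeasurable

lemma integrable_pairLaw {f : Fin 2 × ℝ → ℝ} (hf : Measurable f)
    (h₁ : Integrable (fun x => f (0, x)) (gaussianReal μ₁ v₁))
    (h₂ : Integrable (fun x => f (1, x)) (gaussianReal μ₂ v₂)) :
    Integrable f (pairLaw a₁ a₂ μ₁ μ₂ v₁ v₂) := by
  rw [pairLaw_eq_map]
  exact (((integrable_map_prodMk_iff 0 hf).2 h₁).smul_measure ENNReal.ofReal_ne_top).add_measure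
    (((integrable_map_prodMk_iff 1 hf).2 h₂).smul_measure ENNReal.ofReal_ne_top)

lemma integral_pairLaw (ha₁ : 0 ≤ a₁) (ha₂ : 0 ≤ a₂) {f : Fin 2 × ℝ → ℝ} (hf : Measurable f)
    (h₁ : Integrable (fun x => f (0, x)) (gaussianReal μ₁ v₁))
    (h₂ : Integrable (fun x => f (1, x)) (gaussianReal μ₂ v₂)) :
    ∫ p, f p ∂(pairLaw a₁ a₂ μ₁ μ₂ v₁ v₂) =
      a₁ * ∫ x, f (0, x) ∂gaussianReal μ₁ v₁ + a₂ * ∫ x, f (1, x) ∂gaussianReal μ₂ v₂ := by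
  rw [pairLaw_eq_map, integral_add_measure
    (((integrable_map_prodMk_iff 0 hf).2 h₁).smul_measure ENNReal.ofReal_ne_top)
    (((integrable_map_prodMk_iff 1 hf).2 h₂).smul_measure ENNReal.ofReal_ne_top),
    integral_smul_measure, integral_smul_measure,
    integral_map measurable_prodMk_left.aemeasurable hf.aestronglyMeasurable,
    integral_map measurable_prodMk_left.aemeasurable hf.aestronglyMeasurable,
    ENNReal.toReal_ofReal ha₁, ENNReal.toReal_ofReal ha₂, smul_eq_mul, smul_eq_mul]

variable {Ω : Type*} [MeasurableSpace Ω] {P : Measure Ω} {Y : ℕ → Ω → Fin 2 × ℝ}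

lemma ae_tendsto_empiricalMean_pairLaw (ha₁ : 0 ≤ a₁) (ha₂ : 0 ≤ a₂)
    (hY : ∀ n, Measurable (Y n)) (hindep : Pairwise fun i j => IndepFun (Y i) (Y j) P)
    (hlaw : ∀ n, P.map (Y n) = pairLaw a₁ a₂ μ₁ μ₂ v₁ v₂) (c : Fin 2 → ℝ) (g : ℝ → ℝ)
    (hg : Measurable g) (hg₁ : Integrable g (gaussianReal μ₁ v₁))
    (hg₂ : Integrable g (gaussianReal μ₂ v₂)) :
    ∀ᵐ ω ∂P, Tendsto (empiricalMean fun n => c (Y n ω).1 * g (Y n ω).2) atTop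
      (𝓝 (a₁ * c 0 * ∫ x, g x ∂gaussianReal μ₁ v₁ + a₂ * c 1 * ∫ x, g x ∂gaussianReal μ₂ v₂)) := by
  have hf : Measurable fun p : Fin 2 × ℝ => c p.1 * g p.2 :=
    (measurable_of_finite c).comp measurable_fst |>.mul (hg.comp measurable_snd)
  have h := ae_tendsto_empiricalMean_of_identDistrib hY hindep hlaw hf
    (integrable_pairLaw hf (hg₁.const_mul (c 0)) (hg₂.const_mul (c 1)))
  simpa only [integral_pairLaw ha₁ ha₂ hf (hg₁.const_mul (c 0)) (hg₂.const_mul (c 1)),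
    integral_const_mul, ← mul_assoc] using h

lemma ae_tendstoWeightedMoments_pairLaw (ha₁ : 0 ≤ a₁) (ha₂ : 0 ≤ a₂)
    (hY : ∀ n, Measurable (Y n)) (hindep : Pairwise fun i j => IndepFun (Y i) (Y j) P)
    (hlaw : ∀ n, P.map (Y n) = pairLaw a₁ a₂ μ₁ μ₂ v₁ v₂) (c : Fin 2 → ℝ) {a μ v : ℝ}
    (hmass : a₁ * c 0 + a₂ * c 1 = a) (hfirst : a₁ * c 0 * μ₁ + a₂ * c 1 * μ₂ = a * μ)
    (hsecond : a₁ * c 0 * (v₁ + μ₁ ^ 2) + a₂ * c 1 * (v₂ + μ₂ ^ 2) = a * (v + μ ^ 2)) :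
    ∀ᵐ ω ∂P, TendstoWeightedMoments (fun n => c (Y n ω).1) (fun n => (Y n ω).2) a μ v := by
  have moment := ae_tendsto_empiricalMean_pairLaw ha₁ ha₂ hY hindep hlaw c
  filter_upwards [moment (fun _ => 1) measurable_const (integrable_const 1) (integrable_const 1),
    moment id measurable_id ((memLp_id_gaussianReal 1).integrable le_rfl)
      ((memLp_id_gaussianReal 1).integrable le_rfl),
    moment (· ^ 2) (measurable_id.pow_const 2) (memLp_id_gaussianReal 2).integrable_sq
      (memLp_id_gaussianReal 2).integrable_sq] with ω h₀ h₁ h₂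
  refine ⟨?_, ?_, ?_⟩
  · rw [← hmass]
    simpa using h₀
  · rw [← hfirst]
    simpa using h₁
  · rw [← hsecond]
    simpa [integral_sq_gaussianReal] using h₂

end pairLaw

lemma tendsto_measure_one_of_ae_eventually_mem {Ω : Type*} [MeasurableSpace Ω] {P : Measure Ω}
    [IsProbabilityMeasure P] {A : ℕ → Set Ω} (h : ∀ᵐ ω ∂P, ∀ᶠ N in atTop, ω ∈ A N) :
    Tendsto (fun N => P (A N)) atTop (𝓝 1) := by
  set B : ℕ → Set Ω := fun N => {ω | ∀ M ≥ N, ω ∈ A M}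
  have hB : Monotone B := fun N N' hN ω hω M hM => hω M (hN.trans hM)
  have hunion : P (⋃ N, B N) = 1 := by
    rw [← measure_univ (μ := P)]
    refine measure_congr (ae_eq_univ.2 ?_)
    convert ae_iff.1 h using 2
    ext ω
    simp [B, eventually_atTop]
  refine tendsto_of_tendsto_of_tendsto_of_le_of_le (hunion ▸ tendsto_measure_iUnion_atTop hB)
    tendsto_const_nhds (fun N => measure_mono fun ω (hω : ω ∈ B N) => hω N le_rfl)
    fun N => prob_le_one

theorem lln_step_half_log_G_general
    {Ω : Type*} [MeasurableSpace Ω] (P : Measure Ω) [IsProbabilityMeasure P]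
    (a₁ a₂ μ₁ μ₂ : ℝ) (v₁ v₂ : ℝ≥0)
    (ha₁ : 0 < a₁) (ha₂ : 0 < a₂)
    (hv₁ : 0 < v₁) (hv₂ : 0 < v₂)
    (Z : ℕ → Ω → Fin 2) (X : ℕ → Ω → ℝ)
    (hZ : ∀ n, Measurable (Z n)) (hX : ∀ n, Measurable (X n))
    (hindep : iIndepFun (fun n ω => (Z n ω, X n ω)) P)
    (hlaw : ∀ n, Measure.map (fun ω => (Z n ω, X n ω)) P = pairLaw a₁ a₂ μ₁ μ₂ v₁ v₂)
    (ε : ℝ) (hε : 0 < ε) :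
    Filter.Tendsto
      (fun N : ℕ =>
        P {ω | Vinf (fun i : Fin N => X i ω) ≤
          ((a₁ / 2 * Real.log (v₁ : ℝ) + a₂ / 2 * Real.log (v₂ : ℝ)
            + H2 a₁ a₂ + ε : ℝ) : EReal)})
      Filter.atTop (nhds 1) := by
  have hY (n : ℕ) : Measurable fun ω => (Z n ω, X n ω) := (hZ n).prodMk (hX n)
  have hpair := fun i j (hij : i ≠ j) => hindep.indepFun hij
  let c : Fin 2 → ℝ := fun z => if z = 0 then 1 else 0
  have h₁ := ae_tendstoWeightedMoments_pairLaw ha₁.le ha₂.le hY hpair hlaw c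
    (a := a₁) (μ := μ₁) (v := v₁) (by simp [c]) (by simp [c]) (by simp [c])
  have h₂ := ae_tendstoWeightedMoments_pairLaw ha₁.le ha₂.le hY hpair hlaw (fun z => 1 - c z)
    (a := a₂) (μ := μ₂) (v := v₂) (by simp [c]) (by simp [c]) (by simp [c])
  refine tendsto_measure_one_of_ae_eventually_mem ?_
  filter_upwards [h₁, h₂] with ω h₁ h₂
  have hc (n : ℕ) : 0 ≤ c (Z n ω) ∧ c (Z n ω) ≤ 1 := by
    simp only [c]
    split_ifs <;> norm_num
  filter_upwards [eventually_Vinf_lt hc h₁ h₂ ha₁ ha₂ (mod_cast hv₁) (mod_cast hv₂)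
    (lt_add_of_pos_right _ hε)] with N hN
  exact hN.le

/-- **Law-of-large-numbers step in the consistency proof.** For i.i.d. labelled mixture
samples `(Z_n, X_n)`, the infimum `V_N` of `(1/2) ln G` over admissible soft assignments
eventually drops below `(α₁*/2) ln (σ₁*)² + (α₂*/2) ln (σ₂*)² + H(α₁*, α₂*) + ε` with
probability tending to one. -/
theorem lln_step_half_log_G
    {Ω : Type*} [MeasurableSpace Ω] (P : Measure Ω) [IsProbabilityMeasure P]
    (a₁ a₂ μ₁ μ₂ : ℝ) (v₁ v₂ : ℝ≥0)
    (ha₁ : 0 < a₁) (ha₂ : 0 < a₂) (hsum : a₁ + a₂ = 1)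
    (hv₁ : 0 < v₁) (hv₂ : 0 < v₂)
    (Z : ℕ → Ω → Fin 2) (X : ℕ → Ω → ℝ)
    (hZ : ∀ n, Measurable (Z n)) (hX : ∀ n, Measurable (X n))
    (hindep : iIndepFun (fun n ω => (Z n ω, X n ω)) P)
    (hlaw : ∀ n, Measure.map (fun ω => (Z n ω, X n ω)) P = pairLaw a₁ a₂ μ₁ μ₂ v₁ v₂)
    (ε : ℝ) (hε : 0 < ε) :
    Filter.Tendsto
      (fun N : ℕ =>
        P {ω | Vinf (fun i : Fin N => X i ω) ≤
          ((a₁ / 2 * Real.log (v₁ : ℝ) + a₂ / 2 * Real.log (v₂ : ℝ)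
            + H2 a₁ a₂ + ε : ℝ) : EReal)})
      Filter.atTop (nhds 1) :=
  lln_step_half_log_G_general P a₁ a₂ μ₁ μ₂ v₁ v₂ ha₁ ha₂ hv₁ hv₂ Z X hZ hX hindep hlaw ε hε

end
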